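/- Let d_x ≥ d_z ≥ 2 and n ≥ 1, with d_z = K·m split into K slots of dimension m. Let F_int denote the class of maps f : ℝ^{d_z} → ℝ^{d_x} that are homeomorphisms onto their image and have the form f(z) = Σ_{k=1}^K f^k(z_k) + Σ_{α : |α| ≤ n} c_α z^α with f^k : ℝ^m → ℝ^{d_x}, multi-indices α ∈ ℕ₀^{d_z}, and c_α ∈ ℝ^{d_x}. Let G be a set of continuous functions from ℝ^{d_x} to ℝ^{d_z} such that: (i) G is closed under addition; (ii) G is closed under coordinate projections, i.e. for every g ∈ G and every index set I ⊆ {1,…,d_x}, the function x ↦ g(x_I, 0_{I^c}) (obtained from g by setting all coordinates outside I to zero) belongs to G; (iii) for every f ∈ F_int there exists g ∈ G with g(f(z)) = z for all z ∈ ℝ^{d_z}. Let f ∈ F_int and suppose there is an index set I ⊆ {1,…,d_x} with |I| = d_z such that the coordinate restriction f_I : ℝ^{d_z} → ℝ^{d_z} (the map z ↦ (f(z))_I) is a homeomorphism onto its image. Then for every compact set K ⊂ ℝ^{d_z}, the set of restrictions {(g ∘ f)|_K : g ∈ G} is dense in C(K, ℝ^{d_z}) with the supremum norm. -/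

import Mathlib

/-- `f : ℝ^{d_z} → ℝ^{d_x}` (with `d_z = K·m` coordinates indexed by `Fin K × Fin m`, i.e.
`K` slots of dimension `m`) has the F_int form
`f(z) = Σ_{k=1}^K f^k(z_k) + Σ_{α : |α| ≤ n} c_α z^α`, where the second sum ranges over
multi-indices `α ∈ ℕ₀^{d_z}` with `|α| ≤ n` and `c_α ∈ ℝ^{d_x}`. -/
def FIntForm (K m n d_x : ℕ)
    (f : ((Fin K × Fin m) → ℝ) → (Fin d_x → ℝ)) : Prop :=
  ∃ (F : Fin K → (Fin m → ℝ) → (Fin d_x → ℝ))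
    (S : Finset ((Fin K × Fin m) → ℕ))
    (c : ((Fin K × Fin m) → ℕ) → (Fin d_x → ℝ)),
    (∀ α ∈ S, ∑ i, α i ≤ n) ∧
    ∀ z, f z = (∑ k, F k (fun j => z (k, j))) + ∑ α ∈ S, (∏ i, z i ^ α i) • c α

namespace DRAux

variable {K m d_x : ℕ}

/-- embed `ℝ^{K×m}` into the `I`-coordinates of `ℝ^{d_x}` via a bijection `σ`. -/
def iotaL (I : Finset (Fin d_x)) (σ : (Fin K × Fin m) ≃ {i // i ∈ I}) :
    ((Fin K × Fin m) → ℝ) →ₗ[ℝ] (Fin d_x → ℝ) where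
  toFun v := fun i => if h : i ∈ I then v (σ.symm ⟨i, h⟩) else 0
  map_add' v w := by funext i; by_cases h : i ∈ I <;> simp [h]
  map_smul' c v := by funext i; by_cases h : i ∈ I <;> simp [h]

lemma iotaL_apply_mem (I : Finset (Fin d_x)) (σ : (Fin K × Fin m) ≃ {i // i ∈ I})
    (v : (Fin K × Fin m) → ℝ) {i : Fin d_x} (h : i ∈ I) :
    iotaL I σ v i = v (σ.symm ⟨i, h⟩) := dif_pos h

lemma iotaL_apply_not_mem (I : Finset (Fin d_x)) (σ : (Fin K × Fin m) ≃ {i // i ∈ I})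
    (v : (Fin K × Fin m) → ℝ) {i : Fin d_x} (h : i ∉ I) :
    iotaL I σ v i = 0 := dif_neg h

lemma iotaL_isometry (I : Finset (Fin d_x)) (σ : (Fin K × Fin m) ≃ {i // i ∈ I}) :
    Isometry (iotaL I σ) := by
  refine Isometry.of_dist_eq fun v w => ?_
  rw [dist_pi_def, dist_pi_def]
  congr 1
  apply le_antisymm
  · refine Finset.sup_le fun i _ => ?_
    by_cases h : i ∈ I
    · rw [iotaL_apply_mem I σ v h, iotaL_apply_mem I σ w h]
      exact Finset.le_sup (f := fun a => nndist (v a) (w a)) (Finset.mem_univ (σ.symm ⟨i, h⟩))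
    · rw [iotaL_apply_not_mem I σ v h, iotaL_apply_not_mem I σ w h]
      exact le_trans (le_of_eq (nndist_self _)) zero_le
  · refine Finset.sup_le fun a _ => ?_
    have h2 : (σ a : Fin d_x) ∈ I := (σ a).2
    have e1 : iotaL I σ v (σ a) = v a := by
      rw [iotaL_apply_mem I σ v h2]
      congr 1
      simp
    have e2 : iotaL I σ w (σ a) = w a := by
      rw [iotaL_apply_mem I σ w h2]
      congr 1
      simp
    rw [← e1, ← e2]
    exact Finset.le_sup (f := fun b => nndist (iotaL I σ v b) (iotaL I σ w b))
      (Finset.mem_univ ((σ a : Fin d_x)))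

/-- the dot product on `ℝ^{K×m}` -/
def dot (u x : (Fin K × Fin m) → ℝ) : ℝ := ∑ a, u a * x a

lemma dot_add_left (u v x : (Fin K × Fin m) → ℝ) :
    dot (u + v) x = dot u x + dot v x := by
  simp [dot, add_mul, Finset.sum_add_distrib]

lemma dot_sub_left (u v x : (Fin K × Fin m) → ℝ) :
    dot (u - v) x = dot u x - dot v x := by
  simp [dot, sub_mul, Finset.sum_sub_distrib]

lemma dot_zero_left (x : (Fin K × Fin m) → ℝ) : dot (0 : (Fin K × Fin m) → ℝ) x = 0 := by
  simp [dot]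

lemma dot_single (a : Fin K × Fin m) (c : ℝ) (x : (Fin K × Fin m) → ℝ) :
    dot (Pi.single a c) x = c * x a := by
  classical
  rw [dot, Finset.sum_eq_single a]
  · rw [Pi.single_eq_same]
  · intro b _ hb
    rw [Pi.single_eq_of_ne hb, zero_mul]
  · intro hx; exact absurd (Finset.mem_univ a) hx

lemma sum_single_smul (w : (Fin K × Fin m) → ℝ) :
    ∑ a, w a • (Pi.single a 1 : (Fin K × Fin m) → ℝ) = w := by
  classical
  funext j
  rw [Finset.sum_apply]
  rw [Finset.sum_eq_single j]
  · simp
  · intro b _ hb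
    simp [Pi.single_eq_of_ne (Ne.symm hb)]
  · intro hx; exact absurd (Finset.mem_univ j) hx

lemma prod_pow_single (w : (Fin K × Fin m) → ℝ) (a : Fin K × Fin m) :
    (∏ i, w i ^ (Pi.single a (1:ℕ)) i) = w a := by
  classical
  rw [Finset.prod_eq_single a]
  · simp
  · intro b _ hb
    simp [Pi.single_eq_of_ne hb]
  · intro hx; exact absurd (Finset.mem_univ a) hx

lemma sum_single_nat (a : Fin K × Fin m) :
    (∑ i, (Pi.single a (1:ℕ)) i) = 1 := by
  classical
  rw [Finset.sum_eq_single a]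
  · simp
  · intro b _ hb
    simp [Pi.single_eq_of_ne hb]
  · intro hx; exact absurd (Finset.mem_univ a) hx

lemma single_nat_inj {a b : Fin K × Fin m}
    (h : (Pi.single a (1:ℕ) : (Fin K × Fin m) → ℕ) = Pi.single b 1) : a = b := by
  classical
  by_contra hab
  have h1 := congrFun h a
  rw [Pi.single_eq_same, Pi.single_eq_of_ne hab] at h1
  exact one_ne_zero h1

lemma single_nat_ne_zero (a : Fin K × Fin m) :
    (Pi.single a (1:ℕ) : (Fin K × Fin m) → ℕ) ≠ 0 := by
  intro hc
  have := congrFun hc a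
  simp at this

/-- an invertible linear map whose `r₀`-row is a prescribed nonzero functional -/
lemma exists_row_equiv (u : (Fin K × Fin m) → ℝ) (hu : u ≠ 0) (r₀ : Fin K × Fin m) :
    ∃ N : ((Fin K × Fin m) → ℝ) ≃ₗ[ℝ] ((Fin K × Fin m) → ℝ), ∀ x, N x r₀ = dot u x := by
  classical
  obtain ⟨i₀, hi₀⟩ : ∃ i, u i ≠ 0 := by
    by_contra hc; push_neg at hc; exact hu (funext hc)
  set E : ((Fin K × Fin m) → ℝ) →ₗ[ℝ] ((Fin K × Fin m) → ℝ) :=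
    { toFun := fun x a => if a = r₀ then dot u x else if a = i₀ then x r₀ else x a
      map_add' := by
        intro x y; funext a
        by_cases h1 : a = r₀
        · subst h1; simp [dot, mul_add, Finset.sum_add_distrib]
        · by_cases h2 : a = i₀
          · subst h2; simp [h1]
          · simp [h1, h2]
      map_smul' := by
        intro c x; funext a
        by_cases h1 : a = r₀
        · subst h1; simp [dot, Finset.mul_sum, mul_left_comm]
        · by_cases h2 : a = i₀
          · subst h2; simp [h1]
          · simp [h1, h2] } with hE
  have hEapp : ∀ x a, E x a = if a = r₀ then dot u x else if a = i₀ then x r₀ else x a := by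
    intro x a; rfl
  have hinj : Function.Injective E := by
    rw [← LinearMap.ker_eq_bot, LinearMap.ker_eq_bot']
    intro x hx
    have hx' : ∀ a, E x a = 0 := fun a => congrFun hx a
    have h0 : ∀ a, a ≠ r₀ → a ≠ i₀ → x a = 0 := by
      intro a h1 h2
      have := hx' a
      rw [hEapp, if_neg h1, if_neg h2] at this
      exact this
    have hr : i₀ ≠ r₀ → x r₀ = 0 := by
      intro h
      have := hx' i₀
      rw [hEapp, if_neg h, if_pos rfl] at this
      exact this
    have hdot : dot u x = 0 := by
      have := hx' r₀
      rw [hEapp, if_pos rfl] at this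
      exact this
    have hxr0 : ∀ b, b ≠ i₀ → x b = 0 := by
      intro b hb
      rcases eq_or_ne b r₀ with rfl | hbr
      · rcases eq_or_ne i₀ b with rfl | hib
        · exact absurd rfl hb
        · exact hr (by exact hib)
      · exact h0 b hbr hb
    have hxi : x i₀ = 0 := by
      have hsum : dot u x = u i₀ * x i₀ := by
        rw [dot, Finset.sum_eq_single i₀]
        · intro b _ hb
          rw [hxr0 b hb, mul_zero]
        · intro hx2; exact absurd (Finset.mem_univ i₀) hx2
      rw [hsum] at hdot
      exact (mul_eq_zero.mp hdot).resolve_left hi₀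
    funext a
    rcases eq_or_ne a i₀ with rfl | hai
    · exact hxi
    · exact hxr0 a hai
  have hsurj : Function.Surjective E := (LinearMap.injective_iff_surjective).mp hinj
  refine ⟨LinearEquiv.ofBijective E ⟨hinj, hsurj⟩, fun x => ?_⟩
  show E x r₀ = dot u x
  rw [hEapp, if_pos rfl]


/-- `ψ = f_I` reindexed through `σ`. -/
def psi {K m d_x : ℕ} (f : ((Fin K × Fin m) → ℝ) → (Fin d_x → ℝ)) {I : Finset (Fin d_x)}
    (σ : (Fin K × Fin m) ≃ {i // i ∈ I}) :
    ((Fin K × Fin m) → ℝ) → ((Fin K × Fin m) → ℝ) :=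
  fun z a => f z ((σ a) : Fin d_x)

lemma atom_mem {K m n d_x : ℕ} (hn : 1 ≤ n)
    (G : Set ((Fin d_x → ℝ) → ((Fin K × Fin m) → ℝ)))
    (hGproj : ∀ g ∈ G, ∀ I : Finset (Fin d_x),
      (fun x => g (fun i => if i ∈ I then x i else 0)) ∈ G)
    (hGexpr : ∀ f' : ((Fin K × Fin m) → ℝ) → (Fin d_x → ℝ),
      FIntForm K m n d_x f' → Topology.IsEmbedding f' →
        ∃ g ∈ G, ∀ z, g (f' z) = z)
    (f : ((Fin K × Fin m) → ℝ) → (Fin d_x → ℝ))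
    (I : Finset (Fin d_x)) (σ : (Fin K × Fin m) ≃ {i // i ∈ I})
    (N : ((Fin K × Fin m) → ℝ) ≃ₗ[ℝ] ((Fin K × Fin m) → ℝ))
    (q r₀ : Fin K × Fin m) (hqr : r₀ ≠ q)
    (τ : ℝ → ℝ) (hτ : Continuous τ) (b : (Fin K × Fin m) → ℝ) :
    ∃ g ∈ G, ∀ z, g (f z) =
      N (psi f σ z - b) - τ (N (psi f σ z - b) r₀) • (Pi.single q 1 : (Fin K × Fin m) → ℝ) := by
  classical
  set eq : (Fin K × Fin m) → ℝ := Pi.single q 1 with heq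
  have heqr : eq r₀ = 0 := Pi.single_eq_of_ne hqr 1
  set Sfun : ((Fin K × Fin m) → ℝ) → ((Fin K × Fin m) → ℝ) :=
    fun w => w + τ (w r₀) • eq with hSfun
  set Sinv : ((Fin K × Fin m) → ℝ) → ((Fin K × Fin m) → ℝ) :=
    fun x => x - τ (x r₀) • eq with hSinv
  have hS_r₀ : ∀ w, Sfun w r₀ = w r₀ := by
    intro w; simp [hSfun, heqr]
  have hSi_r₀ : ∀ w, Sinv w r₀ = w r₀ := by
    intro w; simp [hSinv, heqr]
  have hleft : ∀ w, Sinv (Sfun w) = w := by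
    intro w
    show Sfun w - τ (Sfun w r₀) • eq = w
    rw [hS_r₀]
    show w + τ (w r₀) • eq - τ (w r₀) • eq = w
    abel
  have hright : ∀ x, Sfun (Sinv x) = x := by
    intro x
    show Sinv x + τ (Sinv x r₀) • eq = x
    rw [hSi_r₀]
    show x - τ (x r₀) • eq + τ (x r₀) • eq = x
    abel
  have hScont : Continuous Sfun :=
    continuous_id.add ((hτ.comp (continuous_apply r₀)).smul continuous_const)
  have hSicont : Continuous Sinv :=
    continuous_id.sub ((hτ.comp (continuous_apply r₀)).smul continuous_const)
  set f' : ((Fin K × Fin m) → ℝ) → (Fin d_x → ℝ) :=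
    fun w => iotaL I σ (N.symm (Sfun w) + b) with hf'
  -- F_int form of f'
  have hform : FIntForm K m n d_x f' := by
    refine ⟨fun k y => if k = r₀.1 then τ (y r₀.2) • iotaL I σ (N.symm eq) else 0,
      insert 0 (Finset.univ.image fun a : Fin K × Fin m =>
        (Pi.single a 1 : (Fin K × Fin m) → ℕ)),
      fun α => if α = 0 then iotaL I σ b
        else ∑ a : Fin K × Fin m,
          if α = Pi.single a 1 then iotaL I σ (N.symm (Pi.single a 1)) else 0,
      ?_, ?_⟩
    · intro α hα
      rcases Finset.mem_insert.mp hα with rfl | hα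
      · simp
      · obtain ⟨a, -, rfl⟩ := Finset.mem_image.mp hα
        rw [sum_single_nat a]
        exact hn
    · intro w
      have h0notin : (0 : (Fin K × Fin m) → ℕ) ∉
          Finset.univ.image (fun a : Fin K × Fin m => (Pi.single a 1 : (Fin K × Fin m) → ℕ)) := by
        simp only [Finset.mem_image, not_exists]
        rintro a ⟨-, ha⟩
        exact single_nat_ne_zero a ha
      rw [Finset.sum_insert h0notin,
        Finset.sum_image (fun a _ a' _ hh => single_nat_inj hh)]
      have hLHS : f' w = iotaL I σ (N.symm w) + τ (w r₀) • iotaL I σ (N.symm eq)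
          + iotaL I σ b := by
        show iotaL I σ (N.symm (w + τ (w r₀) • eq) + b) = _
        rw [map_add N.symm, map_smul N.symm, map_add (iotaL I σ), map_add (iotaL I σ),
          map_smul (iotaL I σ)]
      have hk : (∑ k, if k = r₀.1 then τ ((fun j => w (k, j)) r₀.2) • iotaL I σ (N.symm eq)
          else 0) = τ (w r₀) • iotaL I σ (N.symm eq) := by
        rw [Finset.sum_eq_single r₀.1]
        · simp
        · intro k _ hk2
          rw [if_neg hk2]
        · intro hk2; exact absurd (Finset.mem_univ _) hk2
      have hc0 : (∏ i, w i ^ (0 : (Fin K × Fin m) → ℕ) i) •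
          (if (0 : (Fin K × Fin m) → ℕ) = 0 then iotaL I σ b
            else ∑ a : Fin K × Fin m, if (0 : (Fin K × Fin m) → ℕ) = Pi.single a 1
              then iotaL I σ (N.symm (Pi.single a 1)) else 0) = iotaL I σ b := by
        rw [if_pos rfl]
        simp
      have hca : ∀ a : Fin K × Fin m,
          (∏ i, w i ^ (Pi.single a 1 : (Fin K × Fin m) → ℕ) i) •
          (if (Pi.single a 1 : (Fin K × Fin m) → ℕ) = 0 then iotaL I σ b
            else ∑ a' : Fin K × Fin m, if (Pi.single a 1 : (Fin K × Fin m) → ℕ) = Pi.single a' 1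
              then iotaL I σ (N.symm (Pi.single a' 1)) else 0)
          = w a • iotaL I σ (N.symm (Pi.single a 1)) := by
        intro a
        rw [if_neg (single_nat_ne_zero a), prod_pow_single]
        congr 1
        rw [Finset.sum_eq_single a]
        · rw [if_pos rfl]
        · intro a' _ ha'
          rw [if_neg (fun hh => ha' (single_nat_inj hh).symm)]
        · intro hh; exact absurd (Finset.mem_univ _) hh
      have hsum2 : (∑ a : Fin K × Fin m, w a • iotaL I σ (N.symm (Pi.single a 1)))
          = iotaL I σ (N.symm w) := by
        have h1 : N.symm w = ∑ a : Fin K × Fin m, w a • N.symm (Pi.single a 1) := by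
          conv_lhs => rw [← sum_single_smul w]
          rw [map_sum]
          exact Finset.sum_congr rfl fun a _ => by rw [map_smul]
        rw [h1, map_sum]
        exact Finset.sum_congr rfl fun a _ => by rw [map_smul]
      rw [hLHS, hk, hc0]
      rw [Finset.sum_congr rfl (fun a _ => hca a), hsum2]
      abel
  -- embedding of f'
  have hemb : Topology.IsEmbedding f' := by
    have hNc : Continuous (N : ((Fin K × Fin m) → ℝ) →ₗ[ℝ] ((Fin K × Fin m) → ℝ)) :=
      LinearMap.continuous_of_finiteDimensional _
    have hNsc : Continuous (N.symm : ((Fin K × Fin m) → ℝ) →ₗ[ℝ] ((Fin K × Fin m) → ℝ)) :=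
      LinearMap.continuous_of_finiteDimensional _
    have hBemb : Topology.IsEmbedding (fun w => N.symm (Sfun w) + b) := by
      let Sh : ((Fin K × Fin m) → ℝ) ≃ₜ ((Fin K × Fin m) → ℝ) :=
        { toFun := Sfun, invFun := Sinv, left_inv := hleft, right_inv := hright,
          continuous_toFun := hScont, continuous_invFun := hSicont }
      let Nh : ((Fin K × Fin m) → ℝ) ≃ₜ ((Fin K × Fin m) → ℝ) :=
        { toEquiv := N.toEquiv, continuous_toFun := hNc, continuous_invFun := hNsc }
      exact (Homeomorph.addRight b).isEmbedding.comp ((Nh.symm).isEmbedding.comp Sh.isEmbedding)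
    have := (iotaL_isometry I σ).isEmbedding.comp hBemb
    exact this
  obtain ⟨g₀, hg₀G, hg₀⟩ := hGexpr f' hform hemb
  refine ⟨fun x => g₀ (fun i => if i ∈ I then x i else 0), hGproj g₀ hg₀G I, ?_⟩
  intro z
  have hproj : (fun i => if i ∈ I then f z i else 0) = iotaL I σ (psi f σ z) := by
    funext i
    by_cases hi : i ∈ I
    · rw [if_pos hi, iotaL_apply_mem I σ _ hi]
      show f z i = f z ((σ (σ.symm ⟨i, hi⟩)) : Fin d_x)
      rw [Equiv.apply_symm_apply]
    · rw [if_neg hi, iotaL_apply_not_mem I σ _ hi]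
  have hkey : iotaL I σ (psi f σ z) = f' (Sinv (N (psi f σ z - b))) := by
    show _ = iotaL I σ (N.symm (Sfun (Sinv (N (psi f σ z - b)))) + b)
    rw [hright, LinearEquiv.symm_apply_apply]
    congr 1
    abel
  show g₀ (fun i => if i ∈ I then f z i else 0) = _
  rw [hproj, hkey, hg₀]

end DRAux

open DRAux

/-- Let `d_x ≥ d_z = K·m ≥ 2` and `n ≥ 1`. Let `G` be a set of continuous functions
`ℝ^{d_x} → ℝ^{d_z}` that is closed under addition and under coordinate projections, and which
contains a left inverse for every map of F_int form that is a homeomorphism onto its image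
(i.e. a topological embedding). Let `f` be such a map of F_int form which is an embedding,
and suppose there is an index set `I ⊆ {1,…,d_x}` with `|I| = d_z` such that the coordinate
restriction `f_I : z ↦ (f z)_I` is a homeomorphism onto its image. Then the functions
`g ∘ f` for `g ∈ G`, restricted to any compact `K' ⊂ ℝ^{d_z}`, are dense in `C(K', ℝ^{d_z})`
with the supremum norm. -/
theorem composed_left_inverses_generate_dense_representations (K m n d_x : ℕ)
    (hdz : 2 ≤ K * m) (hdx : K * m ≤ d_x) (hn : 1 ≤ n)
    (G : Set ((Fin d_x → ℝ) → ((Fin K × Fin m) → ℝ)))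
    (hGcont : ∀ g ∈ G, Continuous g)
    (hGadd : ∀ g₁ ∈ G, ∀ g₂ ∈ G, g₁ + g₂ ∈ G)
    (hGproj : ∀ g ∈ G, ∀ I : Finset (Fin d_x),
      (fun x => g (fun i => if i ∈ I then x i else 0)) ∈ G)
    (hGexpr : ∀ f' : ((Fin K × Fin m) → ℝ) → (Fin d_x → ℝ),
      FIntForm K m n d_x f' → Topology.IsEmbedding f' →
        ∃ g ∈ G, ∀ z, g (f' z) = z)
    (f : ((Fin K × Fin m) → ℝ) → (Fin d_x → ℝ))
    (hf : FIntForm K m n d_x f) (hfemb : Topology.IsEmbedding f)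
    (I : Finset (Fin d_x)) (hI : I.card = K * m)
    (hfI : Topology.IsEmbedding (fun z (i : {i // i ∈ I}) => f z i.1)) :
    ∀ K' : Set ((Fin K × Fin m) → ℝ), IsCompact K' →
      ∀ h : ((Fin K × Fin m) → ℝ) → ((Fin K × Fin m) → ℝ), ContinuousOn h K' →
        ∀ ε > (0 : ℝ), ∃ g ∈ G, ∀ z ∈ K', dist (g (f z)) (h z) < ε := by
    classical
  intro K' hK' h hh ε hε
  have hcard : Fintype.card (Fin K × Fin m) = Fintype.card {i // i ∈ I} := by
    simp only [Fintype.card_prod, Fintype.card_fin, Fintype.card_coe]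
    exact hI.symm
  let σ : (Fin K × Fin m) ≃ {i // i ∈ I} := Fintype.equivOfCardEq hcard
  have hψinj : Function.Injective (psi f σ) := by
    intro z z' hzz
    apply hfI.injective
    funext i
    have h1 := congrFun hzz (σ.symm i)
    show f z i.1 = f z' i.1
    have h2 : (σ (σ.symm i) : Fin d_x) = i.1 := by rw [Equiv.apply_symm_apply]
    rw [← h2]
    exact h1
  have hψc : Continuous (psi f σ) :=
    continuous_pi fun a => (continuous_apply _).comp hfemb.continuous
  set R : Set ((((Fin K × Fin m)) → ℝ) → (((Fin K × Fin m)) → ℝ)) :=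
    {ρ | ∃ g ∈ G, ∀ z, g (f z) = ρ z} with hRdef
  have hRcongr : ∀ ρ ∈ R, ∀ ρ' : (((Fin K × Fin m)) → ℝ) → (((Fin K × Fin m)) → ℝ),
      (∀ z, ρ z = ρ' z) → ρ' ∈ R := by
    rintro ρ ⟨g, hg, he⟩ ρ' hee
    exact ⟨g, hg, fun z => (he z).trans (hee z)⟩
  have hRadd : ∀ ρ₁ ∈ R, ∀ ρ₂ ∈ R, ρ₁ + ρ₂ ∈ R := by
    rintro ρ₁ ⟨g₁, hg₁, he₁⟩ ρ₂ ⟨g₂, hg₂, he₂⟩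
    refine ⟨g₁ + g₂, hGadd _ hg₁ _ hg₂, fun z => ?_⟩
    show g₁ (f z) + g₂ (f z) = ρ₁ z + ρ₂ z
    rw [he₁ z, he₂ z]
  have hatom : ∀ (N : ((Fin K × Fin m) → ℝ) ≃ₗ[ℝ] ((Fin K × Fin m) → ℝ))
      (q r₀ : Fin K × Fin m), r₀ ≠ q → ∀ (τ : ℝ → ℝ), Continuous τ →
      ∀ (b : (Fin K × Fin m) → ℝ),
      (fun z => N (psi f σ z - b) - τ (N (psi f σ z - b) r₀) •
        (Pi.single q 1 : (Fin K × Fin m) → ℝ)) ∈ R := by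
    intro N q r₀ hqr τ hτ b
    exact atom_mem hn G hGproj hGexpr f I σ N q r₀ hqr τ hτ b
  have hnt : Nontrivial (Fin K × Fin m) := by
    rw [← Fintype.one_lt_card_iff_nontrivial]
    simp only [Fintype.card_prod, Fintype.card_fin]
    omega
  have hconst : ∀ v : (Fin K × Fin m) → ℝ, (fun _ => v) ∈ R := by
    intro v
    obtain ⟨q, r₀, hqr⟩ := exists_pair_ne (Fin K × Fin m)
    have h1 := hatom (LinearEquiv.refl ℝ _) q r₀ hqr.symm (fun _ => 0)
      continuous_const (-v)
    have h2 := hatom ((LinearEquiv.refl ℝ _).trans (LinearEquiv.neg ℝ)) q r₀ hqr.symm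
      (fun _ => 0) continuous_const 0
    have h3 := hRadd _ h1 _ h2
    refine hRcongr _ h3 _ fun z => ?_
    show (psi f σ z - -v) - (0:ℝ) • (Pi.single q 1 : (Fin K × Fin m) → ℝ)
        + ((-(psi f σ z - 0)) - (0:ℝ) • (Pi.single q 1 : (Fin K × Fin m) → ℝ)) = v
    simp only [zero_smul, sub_zero, sub_neg_eq_add]
    abel
  have hcos : ∀ (cc θ : ℝ) (u : (Fin K × Fin m) → ℝ) (q : Fin K × Fin m),
      (fun z => (cc * Real.cos (dot u (psi f σ z) + θ)) •
        (Pi.single q 1 : (Fin K × Fin m) → ℝ)) ∈ R := by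
    intro cc θ u q
    rcases eq_or_ne u 0 with rfl | hu
    · refine hRcongr _ (hconst ((cc * Real.cos θ) • (Pi.single q 1 : (Fin K × Fin m) → ℝ)))
        _ fun z => ?_
      rw [dot_zero_left, zero_add]
    · obtain ⟨r₀, hr₀⟩ := exists_ne q
      obtain ⟨N, hNrow⟩ := exists_row_equiv u hu r₀
      have h1 := hatom N q r₀ hr₀ (fun s => -(cc * Real.cos (s + θ)))
        (((continuous_const.mul ((Real.continuous_cos).comp (continuous_add_right θ)))).neg) 0
      have h2 := hatom (N.trans (LinearEquiv.neg ℝ)) q r₀ hr₀ (fun _ => 0) continuous_const 0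
      have h3 := hRadd _ h1 _ h2
      refine hRcongr _ h3 _ fun z => ?_
      show (N (psi f σ z - 0) - (-(cc * Real.cos (N (psi f σ z - 0) r₀ + θ))) •
            (Pi.single q 1 : (Fin K × Fin m) → ℝ))
          + ((-(N (psi f σ z - 0))) - (0:ℝ) • (Pi.single q 1 : (Fin K × Fin m) → ℝ))
          = (cc * Real.cos (dot u (psi f σ z) + θ)) • (Pi.single q 1 : (Fin K × Fin m) → ℝ)
      rw [sub_zero, hNrow]
      simp only [zero_smul, sub_zero, neg_smul, sub_neg_eq_add]
      abel
  -- finite sums of members of R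
  have hRzero : (0 : (((Fin K × Fin m)) → ℝ) → (((Fin K × Fin m)) → ℝ)) ∈ R := by
    refine hRcongr _ (hconst 0) _ fun z => rfl
  have hRsum : ∀ {β : Type} (s : Finset β)
      (F : β → ((((Fin K × Fin m)) → ℝ) → (((Fin K × Fin m)) → ℝ))),
      (∀ i ∈ s, F i ∈ R) → (∑ i ∈ s, F i) ∈ R := by
    intro β s
    classical
    induction s using Finset.induction_on with
    | empty => intro F _; simpa using hRzero
    | insert _ _ hnotin ih =>
      intro F hF
      rw [Finset.sum_insert hnotin]
      exact hRadd _ (hF _ (Finset.mem_insert_self _ _)) _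
        (ih F fun i hi => hF i (Finset.mem_insert_of_mem hi))
  -- the span of generalized trigonometric functions
  set W₀ : Set (((Fin K × Fin m) → ℝ) → ℝ) :=
    {φ | ∃ u θ, φ = fun z => Real.cos (dot u (psi f σ z) + θ)} with hW₀def
  have hW1 : (fun _ => (1:ℝ)) ∈ W₀ := by
    refine ⟨0, 0, ?_⟩
    funext z
    rw [dot_zero_left, zero_add, Real.cos_zero]
  have hWW : ∀ w₁ ∈ W₀, ∀ w₂ ∈ W₀, w₁ * w₂ ∈ Submodule.span ℝ W₀ := by
    rintro w₁ ⟨u, θ, rfl⟩ w₂ ⟨v, θ', rfl⟩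
    have hid : ((fun z => Real.cos (dot u (psi f σ z) + θ)) *
        (fun z => Real.cos (dot v (psi f σ z) + θ')) : ((Fin K × Fin m) → ℝ) → ℝ)
        = (2⁻¹ : ℝ) • (fun z => Real.cos (dot (u+v) (psi f σ z) + (θ+θ')))
          + (2⁻¹ : ℝ) • (fun z => Real.cos (dot (u-v) (psi f σ z) + (θ-θ'))) := by
      funext z
      show Real.cos (dot u (psi f σ z) + θ) * Real.cos (dot v (psi f σ z) + θ')
        = 2⁻¹ * Real.cos (dot (u+v) (psi f σ z) + (θ+θ'))
          + 2⁻¹ * Real.cos (dot (u-v) (psi f σ z) + (θ-θ'))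
      rw [dot_add_left, dot_sub_left]
      have e1 : dot u (psi f σ z) + dot v (psi f σ z) + (θ + θ')
          = (dot u (psi f σ z) + θ) + (dot v (psi f σ z) + θ') := by ring
      have e2 : dot u (psi f σ z) - dot v (psi f σ z) + (θ - θ')
          = (dot u (psi f σ z) + θ) - (dot v (psi f σ z) + θ') := by ring
      have key : ∀ A B : ℝ, Real.cos A * Real.cos B
          = 2⁻¹ * Real.cos (A + B) + 2⁻¹ * Real.cos (A - B) := by
        intro A B
        rw [Real.cos_add, Real.cos_sub]
        ring
      rw [e1, e2]
      exact key _ _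
    rw [hid]
    exact Submodule.add_mem _
      (Submodule.smul_mem _ _ (Submodule.subset_span ⟨u+v, θ+θ', rfl⟩))
      (Submodule.smul_mem _ _ (Submodule.subset_span ⟨u-v, θ-θ', rfl⟩))
  have hWmul : ∀ p₁ ∈ Submodule.span ℝ W₀, ∀ p₂ ∈ Submodule.span ℝ W₀,
      p₁ * p₂ ∈ Submodule.span ℝ W₀ := by
    intro p₁ hp₁
    induction hp₁ using Submodule.span_induction with
    | mem w hw =>
      intro p₂ hp₂
      induction hp₂ using Submodule.span_induction with
      | mem w₂ hw₂ => exact hWW _ hw _ hw₂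
      | zero => rw [mul_zero]; exact Submodule.zero_mem _
      | add x y hx hy ihx ihy => rw [mul_add]; exact Submodule.add_mem _ ihx ihy
      | smul c x hx ihx => rw [mul_smul_comm]; exact Submodule.smul_mem _ _ ihx
    | zero => intro p₂ _; rw [zero_mul]; exact Submodule.zero_mem _
    | add x y hx hy ihx ihy =>
      intro p₂ hp₂
      rw [add_mul]; exact Submodule.add_mem _ (ihx _ hp₂) (ihy _ hp₂)
    | smul c x hx ihx =>
      intro p₂ hp₂
      rw [smul_mul_assoc]; exact Submodule.smul_mem _ _ (ihx _ hp₂)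
  -- realizability of span elements componentwise
  have hRspan : ∀ (q : Fin K × Fin m), ∀ p ∈ Submodule.span ℝ W₀,
      (fun z => p z • (Pi.single q 1 : (Fin K × Fin m) → ℝ)) ∈ R := by
    intro q p hp
    obtain ⟨nn, cf, gf, hpsum⟩ := Submodule.mem_span_set'.mp hp
    have hEq : (fun z => p z • (Pi.single q 1 : (Fin K × Fin m) → ℝ))
        = ∑ i : Fin nn, (fun z => (cf i * (gf i : ((Fin K × Fin m) → ℝ) → ℝ) z) •
            (Pi.single q 1 : (Fin K × Fin m) → ℝ)) := by
      funext z
      rw [Finset.sum_apply, ← hpsum, Finset.sum_apply]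
      rw [Finset.sum_smul]
      exact Finset.sum_congr rfl fun i _ => by
        rw [Pi.smul_apply, smul_eq_mul]
    rw [hEq]
    refine hRsum Finset.univ _ fun i _ => ?_
    obtain ⟨u, θ, hgf⟩ := (gf i).2
    refine hRcongr _ (hcos (cf i) θ u q) _ fun z => ?_
    rw [hgf]
  -- Stone–Weierstrass on K'
  haveI : CompactSpace K' := isCompact_iff_compactSpace.mp hK'
  have hcont_gen : ∀ (u : (Fin K × Fin m) → ℝ) (θ : ℝ),
      Continuous (fun x : K' => Real.cos (dot u (psi f σ (x : (Fin K × Fin m) → ℝ)) + θ)) := by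
    intro u θ
    apply Real.continuous_cos.comp
    apply Continuous.add ?_ continuous_const
    apply continuous_finset_sum
    intro a _
    exact continuous_const.mul ((continuous_apply a).comp (hψc.comp continuous_subtype_val))
  set A : Subalgebra ℝ C(K', ℝ) := Algebra.adjoin ℝ
    {F : C(K', ℝ) | ∃ u θ, F = ContinuousMap.mk _ (hcont_gen u θ)} with hAdef
  have hsep : A.SeparatesPoints := by
    rintro x y hxy
    have hzz : (x : (Fin K × Fin m) → ℝ) ≠ (y : (Fin K × Fin m) → ℝ) :=
      fun hc => hxy (Subtype.ext hc)
    have hpsine : psi f σ (x : (Fin K × Fin m) → ℝ) ≠ psi f σ (y : (Fin K × Fin m) → ℝ) :=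
      fun hc => hzz (hψinj hc)
    obtain ⟨a, ha⟩ := Function.ne_iff.mp hpsine
    set s := psi f σ (x : (Fin K × Fin m) → ℝ) a with hs
    set t := psi f σ (y : (Fin K × Fin m) → ℝ) a with ht
    have hden : (0:ℝ) < 1 + |s| + |t| := by positivity
    set ε₀ : ℝ := (Real.pi / 2) / (1 + |s| + |t|) with hε₀def
    have hπ : (0:ℝ) < Real.pi / 2 := by positivity
    have hε₀ : 0 < ε₀ := div_pos hπ hden
    have hbound : ∀ r : ℝ, |r| ≤ |s| + |t| → |ε₀ * r| ≤ Real.pi / 2 := by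
      intro r hr
      rw [abs_mul, abs_of_pos hε₀]
      calc ε₀ * |r| ≤ ε₀ * (1 + |s| + |t|) := by
            apply mul_le_mul_of_nonneg_left _ hε₀.le
            nlinarith [abs_nonneg r]
        _ = Real.pi / 2 := by
            rw [hε₀def, div_mul_cancel₀]
            exact hden.ne'
    have hmem1 : ε₀ * s ∈ Set.Icc (-(Real.pi/2)) (Real.pi/2) := by
      have := hbound s (by nlinarith [abs_nonneg t])
      constructor <;> [linarith [neg_abs_le (ε₀ * s)]; linarith [le_abs_self (ε₀ * s)]]
    have hmem2 : ε₀ * t ∈ Set.Icc (-(Real.pi/2)) (Real.pi/2) := by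
      have := hbound t (by nlinarith [abs_nonneg s])
      constructor <;> [linarith [neg_abs_le (ε₀ * t)]; linarith [le_abs_self (ε₀ * t)]]
    refine ⟨_, ⟨ContinuousMap.mk _ (hcont_gen (Pi.single a ε₀) (-(Real.pi/2))),
      Algebra.subset_adjoin ⟨Pi.single a ε₀, -(Real.pi/2), rfl⟩, rfl⟩, ?_⟩
    show Real.cos (dot (Pi.single a ε₀) (psi f σ (x : (Fin K × Fin m) → ℝ)) + -(Real.pi/2))
      ≠ Real.cos (dot (Pi.single a ε₀) (psi f σ (y : (Fin K × Fin m) → ℝ)) + -(Real.pi/2))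
    rw [dot_single, dot_single, ← hs, ← ht, ← sub_eq_add_neg, ← sub_eq_add_neg,
      Real.cos_sub_pi_div_two, Real.cos_sub_pi_div_two]
    intro hc
    have := Real.injOn_sin hmem1 hmem2 hc
    exact ha (mul_left_cancel₀ hε₀.ne' this)
  have htop := ContinuousMap.subalgebra_topologicalClosure_eq_top_of_separatesPoints A hsep
  -- componentwise approximation
  have happrox : ∀ q : Fin K × Fin m, ∃ p, p ∈ Submodule.span ℝ W₀ ∧
      ∀ x : K', |h (x : (Fin K × Fin m) → ℝ) q - p (x : (Fin K × Fin m) → ℝ)| < ε := by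
    intro q
    set hq : C(K', ℝ) := ContinuousMap.mk (fun x : K' => h (x : (Fin K × Fin m) → ℝ) q)
      ((continuous_apply q).comp hh.restrict) with hhq
    have h1 : hq ∈ A.topologicalClosure := by
      rw [htop]; trivial
    have h2 : hq ∈ closure (A : Set C(K', ℝ)) := h1
    obtain ⟨F, hFA, hFd⟩ := Metric.mem_closure_iff.mp h2 ε hε
    have hex : ∃ p, p ∈ Submodule.span ℝ W₀ ∧
        ∀ x : K', F x = p (x : (Fin K × Fin m) → ℝ) := by
      clear hFd
      induction hFA using Algebra.adjoin_induction with
      | mem F hF =>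
        obtain ⟨u, θ, rfl⟩ := hF
        exact ⟨_, Submodule.subset_span ⟨u, θ, rfl⟩, fun x => rfl⟩
      | algebraMap r =>
        refine ⟨r • (fun _ => (1:ℝ)), Submodule.smul_mem _ _ (Submodule.subset_span hW1),
          fun x => ?_⟩
        simp
      | add F₁ F₂ h₁ h₂ ih₁ ih₂ =>
        obtain ⟨p₁, hp₁, he₁⟩ := ih₁
        obtain ⟨p₂, hp₂, he₂⟩ := ih₂
        refine ⟨p₁ + p₂, Submodule.add_mem _ hp₁ hp₂, fun x => ?_⟩
        show F₁ x + F₂ x = p₁ _ + p₂ _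
        rw [he₁ x, he₂ x]
      | mul F₁ F₂ h₁ h₂ ih₁ ih₂ =>
        obtain ⟨p₁, hp₁, he₁⟩ := ih₁
        obtain ⟨p₂, hp₂, he₂⟩ := ih₂
        refine ⟨p₁ * p₂, hWmul _ hp₁ _ hp₂, fun x => ?_⟩
        show F₁ x * F₂ x = p₁ _ * p₂ _
        rw [he₁ x, he₂ x]
    obtain ⟨p, hpspan, hpe⟩ := hex
    refine ⟨p, hpspan, fun x => ?_⟩
    have h3 : dist (hq x) (F x) ≤ dist hq F := ContinuousMap.dist_apply_le_dist x
    have h4 : dist (hq x) (F x) < ε := lt_of_le_of_lt h3 hFd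
    rw [Real.dist_eq] at h4
    rw [← hpe x]
    exact h4
  choose p hpspan hpbound using happrox
  have hsummem : (∑ q : Fin K × Fin m,
      (fun z => p q z • (Pi.single q 1 : (Fin K × Fin m) → ℝ))) ∈ R :=
    hRsum Finset.univ _ fun q _ => hRspan q _ (hpspan q)
  obtain ⟨g, hgG, hge⟩ := hsummem
  refine ⟨g, hgG, fun z hz => ?_⟩
  rw [hge z]
  have hev : (∑ q : Fin K × Fin m,
      (fun z => p q z • (Pi.single q 1 : (Fin K × Fin m) → ℝ))) z = fun a => p a z := by
    funext a
    rw [Finset.sum_apply, Finset.sum_apply]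
    rw [Finset.sum_eq_single a]
    · simp
    · intro b _ hb
      simp [Pi.single_eq_of_ne (Ne.symm hb)]
    · intro hb; exact absurd (Finset.mem_univ a) hb
  rw [hev, dist_pi_lt_iff hε]
  intro a
  have hb := hpbound a ⟨z, hz⟩
  rw [Real.dist_eq, abs_sub_comm]
  exact hb
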